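/- arXiv:1605.01595 — 4 statements merged into one kernel-verified Lean document; each statement's English description precedes it below -/
import Mathlib

section
/- Let A be an n×n complex matrix with upper bandwidth β ≥ 1 and lower bandwidth γ ≥ 1, and suppose f(A) = ∑_{j=0}^∞ f_j P_j(A) where each P_j is a polynomial of degree j satisfying ‖P_j(A)‖ ≤ 2 in the operator norm, the series converging in operator norm. Then for k ≠ ℓ, with ξ = ⌈(ℓ-k)/β⌉ if k < ℓ and ξ = ⌈(k-ℓ)/γ⌉ otherwise, one has |(f(A))_{k,ℓ}| ≤ 2 ∑_{j=ξ}^∞ |f_j|. -/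
open scoped Matrix.Norms.L2Operator

/-!
A product of matrices with bandwidths `(β, γ)` and `(β', γ')` has bandwidths `(β + β', γ + γ')`,
so `P_j(A)` has bandwidths `(jβ, jγ)` and its `(k, ℓ)` entry vanishes for `j < ξ`. Hence
`F k ℓ = ∑_{j ≥ ξ} f_j P_j(A)_{kℓ}`, and every entry of `P_j(A)` is bounded by its operator
norm, which is at most `2`.
-/

theorem Nat.mul_lt_of_lt_ceilDiv {a b c : ℕ} (h : c < b ⌈/⌉ a) : a * c < b := by
  rcases a.eq_zero_or_pos with rfl | ha
  · simp at h
  · exact lt_of_not_ge fun hle => h.not_ge ((ceilDiv_le_iff_le_mul ha).2 hle)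

namespace Matrix

theorem norm_apply_le_l2_opNorm {𝕜 m n : Type*} [RCLike 𝕜] [Fintype m] [Fintype n]
    [DecidableEq n] (A : Matrix m n 𝕜) (i : m) (j : n) : ‖A i j‖ ≤ ‖A‖ :=
  calc ‖A i j‖ = ‖(EuclideanSpace.equiv m 𝕜).symm (A *ᵥ EuclideanSpace.single j 1) i‖ := by
        simp
    _ ≤ ‖(EuclideanSpace.equiv m 𝕜).symm (A *ᵥ EuclideanSpace.single j 1)‖ :=
        PiLp.norm_apply_le _ i
    _ ≤ ‖A‖ * ‖EuclideanSpace.single j (1 : 𝕜)‖ := A.l2_opNorm_mulVec _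
    _ = ‖A‖ := by simp

variable {R : Type*} {n : ℕ}

def IsBanded [Zero R] (A : Matrix (Fin n) (Fin n) R) (β γ : ℕ) : Prop :=
  ∀ p q : Fin n, (p : ℕ) + β < q ∨ (q : ℕ) + γ < p → A p q = 0

namespace IsBanded

section Zero

variable [Zero R] {A : Matrix (Fin n) (Fin n) R} {β γ β' γ' : ℕ}

theorem mono (hA : IsBanded A β γ) (hβ : β ≤ β') (hγ : γ ≤ γ') : IsBanded A β' γ' :=
  fun p q h => hA p q (by omega)

theorem smul {S : Type*} [SMulZeroClass S R] (c : S) (hA : IsBanded A β γ) :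
    IsBanded (c • A) β γ :=
  fun p q h => by rw [smul_apply, hA p q h, smul_zero]

theorem apply_eq_zero_of_lt_ceilDiv {j : ℕ} (hA : IsBanded A (j * β) (j * γ)) {k ℓ : Fin n}
    (hj : j < if (k : ℕ) < ℓ then ((ℓ : ℕ) - k) ⌈/⌉ β else ((k : ℕ) - ℓ) ⌈/⌉ γ) :
    A k ℓ = 0 := by
  refine hA k ℓ ?_
  split_ifs at hj with hkl
  · have := Nat.mul_lt_of_lt_ceilDiv hj; left; rw [mul_comm]; omega
  · have := Nat.mul_lt_of_lt_ceilDiv hj; right; rw [mul_comm]; omega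

end Zero

theorem sum [AddCommMonoid R] {β γ : ℕ} {ι : Type*} (s : Finset ι)
    {M : ι → Matrix (Fin n) (Fin n) R} (hM : ∀ i ∈ s, IsBanded (M i) β γ) :
    IsBanded (∑ i ∈ s, M i) β γ :=
  fun p q h => by rw [Matrix.sum_apply]; exact Finset.sum_eq_zero fun i hi => hM i hi p q h

section Semiring

variable [Semiring R] {A B : Matrix (Fin n) (Fin n) R} {β γ β' γ' : ℕ}

theorem one : IsBanded (1 : Matrix (Fin n) (Fin n) R) 0 0 :=
  fun p q h => one_apply_ne (by rintro rfl; omega)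

theorem mul (hA : IsBanded A β γ) (hB : IsBanded B β' γ') :
    IsBanded (A * B) (β + β') (γ + γ') := by
  intro p q h
  rw [mul_apply]
  refine Finset.sum_eq_zero fun i _ => ?_
  by_cases hi : (p : ℕ) + β < i ∨ (i : ℕ) + γ < p
  · rw [hA p i hi, zero_mul]
  · rw [hB i q (by omega), mul_zero]

theorem pow (hA : IsBanded A β γ) : ∀ m : ℕ, IsBanded (A ^ m) (m * β) (m * γ)
  | 0 => by simpa using one
  | m + 1 => by simpa [pow_succ, add_mul] using (hA.pow m).mul hA

end Semiring

theorem aeval [CommSemiring R] {A : Matrix (Fin n) (Fin n) R} {β γ : ℕ}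
    (hA : IsBanded A β γ) (P : Polynomial R) :
    IsBanded (Polynomial.aeval A P) (P.natDegree * β) (P.natDegree * γ) := by
  rw [Polynomial.aeval_eq_sum_range]
  refine sum _ fun i hi => ((hA.pow i).mono ?_ ?_).smul _ <;>
    exact Nat.mul_le_mul_right _ (Nat.lt_succ_iff.1 (Finset.mem_range.1 hi))

end IsBanded

end Matrix

theorem norm_le_mul_tsum_norm_of_hasSum_mul {R : Type*} [NonUnitalNormedRing R]
    {f a : ℕ → R} {s : R} {C : ℝ} {ξ : ℕ} (hs : HasSum (fun j => f j * a j) s)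
    (ha_zero : ∀ j < ξ, a j = 0) (ha_le : ∀ j, ‖a j‖ ≤ C) (hf : Summable fun j => ‖f j‖) :
    ‖s‖ ≤ C * ∑' j, ‖f (ξ + j)‖ := by
  have hshift : HasSum (fun j => f (ξ + j) * a (ξ + j)) s := by
    have h := (hasSum_nat_add_iff' ξ).2 hs
    rw [Finset.sum_eq_zero fun j hj => by rw [ha_zero j (Finset.mem_range.1 hj), mul_zero],
      sub_zero] at h
    simpa only [add_comm] using h
  have hfξ : Summable fun j => ‖f (ξ + j)‖ := by
    simpa only [add_comm] using (summable_nat_add_iff ξ).2 hf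
  rw [← hshift.tsum_eq]
  refine tsum_of_norm_bounded (hfξ.hasSum.mul_left C) fun j => ?_
  calc ‖f (ξ + j) * a (ξ + j)‖ ≤ ‖f (ξ + j)‖ * C :=
        (norm_mul_le _ _).trans (mul_le_mul_of_nonneg_left (ha_le _) (norm_nonneg _))
    _ = C * ‖f (ξ + j)‖ := mul_comm _ _

theorem stmt_3_general {n : ℕ} (A : Matrix (Fin n) (Fin n) ℂ) (β γ : ℕ)
    (hband : ∀ k ℓ : Fin n, ((ℓ : ℕ) - (k : ℕ) > β ∨ (k : ℕ) - (ℓ : ℕ) > γ) → A k ℓ = 0)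
    (P : ℕ → Polynomial ℂ) (hdeg : ∀ j, (P j).natDegree = j)
    (hP : ∀ j, ‖(Polynomial.aeval A (P j) : Matrix (Fin n) (Fin n) ℂ)‖ ≤ 2)
    (f : ℕ → ℂ) (hsumf : Summable fun j => ‖f j‖)
    (F : Matrix (Fin n) (Fin n) ℂ)
    (hF : HasSum (fun j => f j • (Polynomial.aeval A (P j) : Matrix (Fin n) (Fin n) ℂ)) F)
    (k ℓ : Fin n)
    (ξ : ℕ)
    (hξ : ξ = if (k : ℕ) < (ℓ : ℕ) then ((ℓ : ℕ) - (k : ℕ)) ⌈/⌉ β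
              else ((k : ℕ) - (ℓ : ℕ)) ⌈/⌉ γ) :
    ‖F k ℓ‖ ≤ 2 * ∑' j : ℕ, ‖f (ξ + j)‖ := by
  have hA : A.IsBanded β γ := fun p q h => hband p q (by omega)
  -- The `L2` operator norm instance is built to carry the product topology.
  have hentry : HasSum (fun j => f j * Polynomial.aeval A (P j) k ℓ) (F k ℓ) :=
    Pi.hasSum.1 (Pi.hasSum.1 hF k) ℓ
  refine norm_le_mul_tsum_norm_of_hasSum_mul hentry (fun j hj => ?_)
    (fun j => (Matrix.norm_apply_le_l2_opNorm _ k ℓ).trans (hP j)) hsumf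
  have hPj := hA.aeval (P j)
  rw [hdeg j] at hPj
  exact hPj.apply_eq_zero_of_lt_ceilDiv (hξ ▸ hj)

/-- Decay bound for entries of a matrix function expanded in a series of polynomials of
degree `j` with `‖P_j(A)‖ ≤ 2` (e.g. Faber polynomials of a convex set containing the
field of values of `A`). -/
theorem stmt_3 {n : ℕ} (A : Matrix (Fin n) (Fin n) ℂ) (β γ : ℕ)
    (hβ : 1 ≤ β) (hγ : 1 ≤ γ)
    (hband : ∀ k ℓ : Fin n, ((ℓ : ℕ) - (k : ℕ) > β ∨ (k : ℕ) - (ℓ : ℕ) > γ) → A k ℓ = 0)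
    (P : ℕ → Polynomial ℂ) (hdeg : ∀ j, (P j).natDegree = j)
    (hP : ∀ j, ‖(Polynomial.aeval A (P j) : Matrix (Fin n) (Fin n) ℂ)‖ ≤ 2)
    (f : ℕ → ℂ) (hsumf : Summable fun j => ‖f j‖)
    (F : Matrix (Fin n) (Fin n) ℂ)
    (hF : HasSum (fun j => f j • (Polynomial.aeval A (P j) : Matrix (Fin n) (Fin n) ℂ)) F)
    (k ℓ : Fin n) (hkl : k ≠ ℓ)
    (ξ : ℕ)
    (hξ : ξ = if (k : ℕ) < (ℓ : ℕ) then ((ℓ : ℕ) - (k : ℕ)) ⌈/⌉ β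
              else ((k : ℕ) - (ℓ : ℕ)) ⌈/⌉ γ) :
    ‖F k ℓ‖ ≤ 2 * ∑' j : ℕ, ‖f (ξ + j)‖ :=
  stmt_3_general A β γ hband P hdeg hP f hsumf F hF k ℓ ξ hξ
end

section
/- Let ρ > 0, R > 1, and ξ > (ρ/2)(R - 1/R) be a real number. Then the function g(τ) = exp((ρ/2)(Rτ + 1/(Rτ))) · τ^{-ξ} on (1,∞) attains its minimum at τ* = (ξ + √(ξ² + ρ²))/(ρR), and τ* > 1. -/
/-!
Taking logarithms, `log g τ = (ρR/2) τ + (ρ/(2R))/τ - ξ log τ`. Applying `log x ≤ x - 1` to both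
`τ/τ*` and `τ*/τ` bounds this from below by its value at `τ*` plus `log(τ/τ*)` times
`(ρR/2) τ* - (ρ/(2R))/τ* - ξ`, which vanishes because `τ*` is the positive root of
`ρR τ² - 2ξτ - ρ/R`. Since `τ ↦ (ρR/2) τ - (ρ/(2R))/τ` is increasing and the hypothesis on `ξ` says
it is below `ξ` at `τ = 1`, we get `τ* > 1`.
-/

open Real Set

theorem isMinOn_mul_add_div_sub_mul_log {a b ξ τ₀ : ℝ} (ha : 0 ≤ a) (hb : 0 ≤ b) (hτ₀ : 0 < τ₀)
    (hcrit : a * τ₀ - b / τ₀ = ξ) :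
    IsMinOn (fun τ => a * τ + b / τ - ξ * log τ) (Ioi 0) τ₀ := by
  intro τ (hτ : 0 < τ)
  set u := log τ - log τ₀
  have hup : 1 + u ≤ τ / τ₀ := by
    linarith [log_le_sub_one_of_pos (div_pos hτ hτ₀), log_div hτ.ne' hτ₀.ne']
  have hdown : 1 - u ≤ τ₀ / τ := by
    linarith [log_le_sub_one_of_pos (div_pos hτ₀ hτ), log_div hτ₀.ne' hτ.ne']
  calc a * τ₀ + b / τ₀ - ξ * log τ₀
      = a * τ₀ * (1 + u) + b / τ₀ * (1 - u) - ξ * log τ := by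
        rw [← hcrit]; ring
    _ ≤ a * τ₀ * (τ / τ₀) + b / τ₀ * (τ₀ / τ) - ξ * log τ := by gcongr
    _ = a * τ + b / τ - ξ * log τ := by field_simp

theorem one_lt_of_sub_lt_mul_sub_div {a b τ₀ : ℝ} (ha : 0 ≤ a) (hb : 0 ≤ b) (hτ₀ : 0 < τ₀)
    (h : a - b < a * τ₀ - b / τ₀) : 1 < τ₀ := by
  by_contra! hle
  have : b ≤ b / τ₀ := le_div_self hb hτ₀ hle
  nlinarith

theorem add_sqrt_sq_add_sq_pos {ξ ρ : ℝ} (hρ : ρ ≠ 0) : 0 < ξ + √(ξ ^ 2 + ρ ^ 2) := by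
  have : |ξ| < √(ξ ^ 2 + ρ ^ 2) := by
    rw [← sqrt_sq_eq_abs]
    exact sqrt_lt_sqrt (sq_nonneg ξ) (by linarith [pow_pos (abs_pos.2 hρ) 2, sq_abs ρ])
  linarith [neg_abs_le ξ]

theorem half_mul_sub_div_eq_of_eq_add_sqrt {ρ R ξ τ₀ : ℝ} (hρ : 0 < ρ) (hR : 0 < R)
    (hτ₀ : τ₀ = (ξ + √(ξ ^ 2 + ρ ^ 2)) / (ρ * R)) :
    ρ * R / 2 * τ₀ - ρ / (2 * R) / τ₀ = ξ := by
  have hs : √(ξ ^ 2 + ρ ^ 2) ^ 2 = ξ ^ 2 + ρ ^ 2 := sq_sqrt (by positivity)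
  have hpos := add_sqrt_sq_add_sq_pos (ξ := ξ) hρ.ne'
  subst hτ₀
  field_simp
  linear_combination hs

/-- The function `g(τ) = exp((ρ/2)(Rτ + 1/(Rτ))) τ^{-ξ}` on `(1,∞)` attains its minimum at
`τ* = (ξ + √(ξ² + ρ²))/(ρR)`, provided `ρ > 0`, `R > 1` and `ξ > (ρ/2)(R - 1/R)`. -/
theorem stmt_6 (ρ R ξ : ℝ) (hρ : 0 < ρ) (hR : 1 < R)
    (hξ : ρ / 2 * (R - 1 / R) < ξ)
    (g : ℝ → ℝ)
    (hg : ∀ τ : ℝ, g τ = Real.exp (ρ / 2 * (R * τ + 1 / (R * τ))) * τ ^ (-ξ))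
    (τstar : ℝ) (hτstar : τstar = (ξ + Real.sqrt (ξ ^ 2 + ρ ^ 2)) / (ρ * R)) :
    1 < τstar ∧ ∀ τ ∈ Set.Ioi (1 : ℝ), g τstar ≤ g τ := by
  have hR₀ : 0 < R := by linarith
  have hτstar₀ : 0 < τstar := hτstar ▸ div_pos (add_sqrt_sq_add_sq_pos hρ.ne') (by positivity)
  have hcrit := half_mul_sub_div_eq_of_eq_add_sqrt hρ hR₀ hτstar
  have hg_exp : ∀ τ, 0 < τ → g τ = exp (ρ * R / 2 * τ + ρ / (2 * R) / τ - ξ * log τ) := by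
    intro τ hτ
    rw [hg, rpow_def_of_pos hτ, ← exp_add]
    congr 1
    field_simp
    ring
  have hξ' : ρ * R / 2 - ρ / (2 * R) < ξ := by
    convert hξ using 1; field_simp
  refine ⟨one_lt_of_sub_lt_mul_sub_div (by positivity) (by positivity) hτstar₀ (hcrit ▸ hξ'),
    fun τ (hτ : 1 < τ) => ?_⟩
  rw [hg_exp τstar hτstar₀, hg_exp τ (by linarith), exp_le_exp]
  exact isMinOn_mul_add_div_sub_mul_log (by positivity) (by positivity) hτstar₀ hcrit
    (mem_Ioi.2 (by linarith : (0 : ℝ) < τ))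
end

section
/- Let c ∈ ℂ with Re(c) > 0, a ≥ b > 0, ρ = √(a²−b²), R = (a+b)/ρ, and 0 < ε ≤ |c| − √(a(a+b)). Then |(1 − ε/|c|) + √((1 − ε/|c|)² − (ρ/c)²)| ≥ ρR/|c|, where the square root is the principal branch (with nonnegative real part). -/
/-!
Write `s` for the principal square root of `t² - w²`, where `t = 1 - ε/|c|` and `w = ρ/c`.
Since `Re s ≥ 0` and `t ≥ 0`, the cross term in `|t + s|²` is nonnegative, so
`|t + s|² ≥ t² + |s|² = t² + |t² - w²| ≥ 2t² - |w|²`.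
With `ρR = a + b` and `ρ² = a² - b²`, the claim `(a + b)²/|c|² ≤ 2t² - ρ²/|c|²` is exactly
`a(a + b) ≤ (t|c|)² = (|c| - ε)²`.
-/

open Complex

theorem Complex.sq_add_sq_norm_le_sq_norm_ofReal_add {t : ℝ} {s : ℂ} (ht : 0 ≤ t)
    (hs : 0 ≤ s.re) : t ^ 2 + ‖s‖ ^ 2 ≤ ‖(t : ℂ) + s‖ ^ 2 := by
  simp only [Complex.sq_norm, normSq_apply, add_re, add_im, ofReal_re, ofReal_im, zero_add]
  nlinarith [mul_nonneg ht hs]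

theorem Complex.re_cpow_one_div_two_nonneg (z : ℂ) : 0 ≤ (z ^ ((1 : ℂ) / 2)).re := by
  rw [one_div, cpow_inv_two_re]
  exact Real.sqrt_nonneg _

theorem Complex.sq_norm_cpow_one_div_two (z : ℂ) : ‖z ^ ((1 : ℂ) / 2)‖ ^ 2 = ‖z‖ := by
  rw [← norm_pow, one_div, cpow_ofNat_inv_pow]

theorem Complex.le_norm_ofReal_add_cpow_one_div_two {t K : ℝ} (w : ℂ) (ht : 0 ≤ t)
    (hK : K ^ 2 + ‖w‖ ^ 2 ≤ 2 * t ^ 2) :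
    K ≤ ‖(t : ℂ) + ((t : ℂ) ^ 2 - w ^ 2) ^ ((1 : ℂ) / 2)‖ := by
  have hz : t ^ 2 - ‖w‖ ^ 2 ≤ ‖(t : ℂ) ^ 2 - w ^ 2‖ := by
    have := norm_sub_norm_le ((t : ℂ) ^ 2) (w ^ 2)
    rwa [norm_pow, norm_pow, norm_real, Real.norm_of_nonneg ht] at this
  refine le_of_sq_le_sq ?_ (norm_nonneg _)
  calc K ^ 2 ≤ t ^ 2 + ‖(t : ℂ) ^ 2 - w ^ 2‖ := by linarith
    _ = t ^ 2 + ‖((t : ℂ) ^ 2 - w ^ 2) ^ ((1 : ℂ) / 2)‖ ^ 2 := by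
      rw [sq_norm_cpow_one_div_two]
    _ ≤ _ := sq_add_sq_norm_le_sq_norm_ofReal_add ht (re_cpow_one_div_two_nonneg _)

theorem stmt_9_general (a b : ℝ) (c : ℂ)
    (ρ R : ℝ) (hρ : ρ = Real.sqrt (a ^ 2 - b ^ 2)) (hR : R = (a + b) / ρ)
    (ε : ℝ) (hεc : ε ≤ ‖c‖ - Real.sqrt (a * (a + b))) :
    ρ * R / ‖c‖ ≤
      ‖(1 - (ε / ‖c‖ : ℝ) : ℂ) +
        (((1 - (ε / ‖c‖ : ℝ) : ℂ)) ^ 2 - ((ρ : ℂ) / c) ^ 2) ^ ((1 : ℂ) / 2)‖ := by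
  -- the left side is `0` when `c = 0` (division by zero) or `ρ = 0`
  rcases eq_or_ne c 0 with rfl | hc
  · simp
  obtain hρ0 | hρpos := (hρ ▸ Real.sqrt_nonneg (a ^ 2 - b ^ 2) : 0 ≤ ρ).eq_or_lt
  · simp [← hρ0]
  have hρsq : ρ ^ 2 = a ^ 2 - b ^ 2 := by
    rw [hρ, Real.sq_sqrt (Real.sqrt_pos.mp (hρ ▸ hρpos)).le]
  have hρR : ρ * R = a + b := by
    rw [hR]
    field_simp
  have hcpos : 0 < ‖c‖ := norm_pos_iff.mpr hc
  set t := 1 - ε / ‖c‖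
  have htc : t * ‖c‖ = ‖c‖ - ε := by
    rw [sub_mul, one_mul, div_mul_cancel₀ _ hcpos.ne']
  obtain ⟨htc0, hsq⟩ := Real.sqrt_le_iff.mp (htc ▸ (by linarith : √(a * (a + b)) ≤ ‖c‖ - ε))
  have ht : 0 ≤ t := nonneg_of_mul_nonneg_left htc0 hcpos
  rw [show (1 - (ε / ‖c‖ : ℝ) : ℂ) = (t : ℂ) by push_cast [t]; ring, hρR]
  refine le_norm_ofReal_add_cpow_one_div_two _ ht ?_
  rw [norm_div, norm_real, Real.norm_of_nonneg hρpos.le, div_pow, div_pow, ← add_div,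
    div_le_iff₀ (by positivity)]
  nlinarith

/-- Key inequality in the decay bound for the inverse square root: with `ρ = √(a²-b²)`,
`R = (a+b)/ρ`, `Re c > 0` and `0 < ε ≤ |c| - √(a(a+b))`, one has
`|(1 - ε/|c|) + √((1 - ε/|c|)² - (ρ/c)²)| ≥ ρR/|c|` (principal square root). -/
theorem stmt_9 (a b : ℝ) (hab : b ≤ a) (hb : 0 < b) (c : ℂ) (hc : 0 < c.re)
    (ρ R : ℝ) (hρ : ρ = Real.sqrt (a ^ 2 - b ^ 2)) (hR : R = (a + b) / ρ)
    (ε : ℝ) (hε : 0 < ε) (hεc : ε ≤ ‖c‖ - Real.sqrt (a * (a + b))) :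
    ρ * R / ‖c‖ ≤
      ‖(1 - (ε / ‖c‖ : ℝ) : ℂ) +
        (((1 - (ε / ‖c‖ : ℝ) : ℂ)) ^ 2 - ((ρ : ℂ) / c) ^ 2) ^ ((1 : ℂ) / 2)‖ :=
  stmt_9_general a b c ρ R hρ hR ε hεc
end

section
/- Let A, ℰ ∈ ℂ^{n×n}, V_m ∈ ℂ^{n×m} with orthonormal columns, H_m ∈ ℂ^{m×m}, h ∈ ℂ, v ∈ ℂⁿ a unit vector orthogonal to the columns of V_m, with (A + ℰ) V_m = V_m H_m + h v e_mᵀ and ℰ V_m = [w₁,…,w_m] (i.e., ℰ V_m has columns w_j). If ŷ satisfies ŷ^{(d)} = H_m ŷ and y = V_m ŷ, then A y(t) − y^{(d)}(t) = −∑_{j=1}^m (e_jᵀ ŷ(t)) w_j + h (e_mᵀ ŷ(t)) v. Consequently, ‖A y(t) − y^{(d)}(t)‖ ≤ ∑_{j=1}^m ‖w_j‖ |e_jᵀ ŷ(t)| + |h| |e_mᵀ ŷ(t)|. -/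
open Matrix

lemma clm_iteratedDeriv {F G : Type*} [NormedAddCommGroup F] [NormedSpace ℝ F]
    [NormedAddCommGroup G] [NormedSpace ℝ G] (L : F →L[ℝ] G) (f : ℝ → F)
    (hf : ContDiff ℝ (⊤ : ℕ∞) f) (k : ℕ) :
    ∀ t, iteratedDeriv k (fun s => L (f s)) t = L (iteratedDeriv k f t) := by
  induction k with
  | zero => intro t; simp [iteratedDeriv_zero]
  | succ k ih =>
    intro t
    have hdf : Differentiable ℝ (iteratedDeriv k f) :=
      hf.differentiable_iteratedDeriv k (by exact_mod_cast lt_top_iff_ne_top.2 (by simp))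
    rw [iteratedDeriv_succ, iteratedDeriv_succ]
    have : deriv (iteratedDeriv k fun s => L (f s)) t
        = deriv (fun s => L (iteratedDeriv k f s)) t := by
      apply Filter.EventuallyEq.deriv_eq
      exact Filter.Eventually.of_forall ih
    rw [this]
    exact (L.hasFDerivAt.comp_hasDerivAt t (hdf t).hasDerivAt).deriv

/-- Residual of the inexact Arnoldi approximation: with `(A + ℰ) V = V H + h v eₘᵀ` and
`w_j` the columns of `ℰ V`, the residual of `y = V ŷ` (where `ŷ^{(d)} = H ŷ`) equals
`-∑_j (e_jᵀ ŷ) w_j + h (eₘᵀ ŷ) v`, whence the Euclidean norm bound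
`‖r‖ ≤ ∑_j ‖w_j‖ |e_jᵀ ŷ| + |h| |eₘᵀ ŷ|`. -/
theorem stmt_15 {n m d : ℕ}
    (A E : Matrix (Fin n) (Fin n) ℂ) (V : Matrix (Fin n) (Fin (m + 1)) ℂ)
    (H : Matrix (Fin (m + 1)) (Fin (m + 1)) ℂ) (h : ℂ) (v : Fin n → ℂ)
    (horth : Vᴴ * V = 1)
    (hunit : ‖(WithLp.equiv 2 (Fin n → ℂ)).symm v‖ = 1)
    (hperp : Vᴴ.mulVec v = 0)
    (harnoldi : (A + E) * V = V * H + h • vecMulVec v (Pi.single (Fin.last m) 1))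
    (w : Fin (m + 1) → Fin n → ℂ) (hw : ∀ j i, (E * V) i j = w j i)
    (yhat : ℝ → Fin (m + 1) → ℂ) (hsmooth : ContDiff ℝ (⊤ : ℕ∞) yhat)
    (hode : ∀ t : ℝ, iteratedDeriv d yhat t = H.mulVec (yhat t))
    (y : ℝ → Fin n → ℂ) (hy : ∀ t, y t = V.mulVec (yhat t)) (t : ℝ) :
    A.mulVec (y t) - iteratedDeriv d y t =
        -(∑ j : Fin (m + 1), (yhat t j) • w j) + (h * yhat t (Fin.last m)) • v ∧
      ‖(WithLp.equiv 2 (Fin n → ℂ)).symm (A.mulVec (y t) - iteratedDeriv d y t)‖ ≤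
        (∑ j : Fin (m + 1),
            ‖(WithLp.equiv 2 (Fin n → ℂ)).symm (w j)‖ * ‖yhat t j‖) +
          ‖h‖ * ‖yhat t (Fin.last m)‖ := by
  classical
  -- the multiplication-by-V continuous linear map
  let L : (Fin (m + 1) → ℂ) →L[ℝ] (Fin n → ℂ) :=
    LinearMap.toContinuousLinearMap ((Matrix.mulVecLin V).restrictScalars ℝ)
  have hL : ∀ x, L x = V.mulVec x := fun x => rfl
  have hiter : iteratedDeriv d y t = V.mulVec (iteratedDeriv d yhat t) := by
    have hye : y = fun s => L (yhat s) := by funext s; rw [hy s, hL]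
    rw [hye, clm_iteratedDeriv L yhat hsmooth d t, hL]
  -- compute `E V ŷ`
  have hEV : (E * V).mulVec (yhat t) = ∑ j, yhat t j • w j := by
    funext i
    simp only [Matrix.mulVec, dotProduct, Finset.sum_apply, Pi.smul_apply, smul_eq_mul, hw]
    exact Finset.sum_congr rfl fun j _ => mul_comm _ _
  -- compute the rank-one part
  have hvv : (Matrix.vecMulVec v (Pi.single (Fin.last m) (1 : ℂ))).mulVec (yhat t)
      = yhat t (Fin.last m) • v := by
    funext i
    simp only [Matrix.mulVec, dotProduct, Matrix.vecMulVec_apply, Pi.smul_apply, smul_eq_mul]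
    rw [Finset.sum_eq_single (Fin.last m)]
    · simp [mul_comm]
    · intro b _ hb; simp [Pi.single_apply, hb]
    · simp
  have hres : A.mulVec (y t) - iteratedDeriv d y t
      = -(∑ j : Fin (m + 1), (yhat t j) • w j) + (h * yhat t (Fin.last m)) • v := by
    rw [hiter, hode, hy]
    have h1 : A.mulVec (V.mulVec (yhat t))
        = ((A + E) * V).mulVec (yhat t) - (E * V).mulVec (yhat t) := by
      rw [Matrix.add_mul, Matrix.add_mulVec, Matrix.mulVec_mulVec]
      abel
    rw [h1, harnoldi, Matrix.add_mulVec, Matrix.smul_mulVec, hvv, hEV,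
      Matrix.mulVec_mulVec]
    rw [smul_smul]
    abel
  refine ⟨hres, ?_⟩
  -- norm bound
  have hnorm : (WithLp.equiv 2 (Fin n → ℂ)).symm (A.mulVec (y t) - iteratedDeriv d y t)
      = -(∑ j : Fin (m + 1), (yhat t j) • (WithLp.equiv 2 (Fin n → ℂ)).symm (w j))
        + (h * yhat t (Fin.last m)) • (WithLp.equiv 2 (Fin n → ℂ)).symm v := by
    rw [hres]; simp only [WithLp.equiv_symm_apply, WithLp.toLp_add, WithLp.toLp_neg, WithLp.toLp_smul, WithLp.toLp_sum]
  rw [hnorm]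
  calc ‖-(∑ j : Fin (m + 1), (yhat t j) • (WithLp.equiv 2 (Fin n → ℂ)).symm (w j))
        + (h * yhat t (Fin.last m)) • (WithLp.equiv 2 (Fin n → ℂ)).symm v‖
      ≤ ‖∑ j : Fin (m + 1), (yhat t j) • (WithLp.equiv 2 (Fin n → ℂ)).symm (w j)‖
        + ‖(h * yhat t (Fin.last m)) • (WithLp.equiv 2 (Fin n → ℂ)).symm v‖ := by
        rw [← norm_neg (∑ j : Fin (m + 1), (yhat t j) • (WithLp.equiv 2 (Fin n → ℂ)).symm (w j))]
          at *
        exact norm_add_le _ _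
    _ ≤ (∑ j : Fin (m + 1),
            ‖(WithLp.equiv 2 (Fin n → ℂ)).symm (w j)‖ * ‖yhat t j‖) +
          ‖h‖ * ‖yhat t (Fin.last m)‖ := by
        gcongr
        · calc ‖∑ j : Fin (m + 1), (yhat t j) • (WithLp.equiv 2 (Fin n → ℂ)).symm (w j)‖
              ≤ ∑ j : Fin (m + 1), ‖(yhat t j) • (WithLp.equiv 2 (Fin n → ℂ)).symm (w j)‖ :=
                norm_sum_le _ _
            _ = ∑ j : Fin (m + 1),
                ‖(WithLp.equiv 2 (Fin n → ℂ)).symm (w j)‖ * ‖yhat t j‖ := by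
                refine Finset.sum_congr rfl fun j _ => ?_
                rw [norm_smul, mul_comm]
        · rw [norm_smul, hunit, mul_one, norm_mul]
end
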